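/- arXiv:0902.4645 — 3 statements merged into one kernel-verified Lean document; each statement's English description precedes it below -/
import Mathlib

section
/- Let (X, m) be a probability space, φ nondecreasing with φ(x)=1 for x≤1. Suppose E_n ⊆ X are disjoint measurable sets with m(E_n) ≥ e^{-2(n+1)} for n in an index set I ⊆ ℕ, and g ≥ 1 is measurable with e^n ≤ g < e^{n+1} on E_n. Then ∑_{n ∈ I} e^{n+1} φ(e^n) m(E_n)^{n/(n+1)} ≤ e³ ∫_X g φ(g) dm. -/
/-!
On `E n` one has `g φ(g) ≥ eⁿ φ(eⁿ)`, so by disjointness `∑ eⁿ φ(eⁿ) m(E n) ≤ ∫ g φ(g)`.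
It remains to compare each term with `e^{n+1} φ(eⁿ) m(E n)^{n/(n+1)}`: writing
`a = a^{n/(n+1)} a^{1/(n+1)}`, the lower bound `a ≥ e^{-2(n+1)}` gives `a^{1/(n+1)} ≥ e⁻²`,
hence `a^{n/(n+1)} ≤ e² a`, and the remaining factor `e` makes up `e³`.
-/

open MeasureTheory Real

open scoped ENNReal

theorem ENNReal.rpow_div_add_one_le_div {a c : ℝ≥0∞} {n : ℕ} (hc₀ : c ≠ 0) (hc : c ≠ ∞)
    (hca : c ^ (n + 1) ≤ a) : a ^ ((n : ℝ) / (n + 1)) ≤ a / c := by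
  rw [ENNReal.le_div_iff_mul_le (Or.inl hc₀) (Or.inl hc)]
  have hroot : c ≤ a ^ ((1 : ℝ) / (n + 1)) := by
    rw [one_div, ENNReal.le_rpow_inv_iff (by positivity)]
    exact_mod_cast hca
  calc a ^ ((n : ℝ) / (n + 1)) * c ≤ a ^ ((n : ℝ) / (n + 1)) * a ^ ((1 : ℝ) / (n + 1)) := by
        gcongr
    _ = a := by
        rw [← ENNReal.rpow_add_of_nonneg _ _ (by positivity) (by positivity), ← add_div,
          div_self (by positivity), ENNReal.rpow_one]

theorem ofReal_exp_succ_mul_mul_rpow_le {n : ℕ} {b : ℝ} {a : ℝ≥0∞}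
    (ha : ENNReal.ofReal (exp (-2 * (n + 1))) ≤ a) :
    ENNReal.ofReal (exp (n + 1) * b) * a ^ ((n : ℝ) / (n + 1)) ≤
      ENNReal.ofReal (exp 3) * (ENNReal.ofReal (exp n * b) * a) := by
  have hpow : ENNReal.ofReal (exp (-2)) ^ (n + 1) ≤ a := by
    rwa [← ENNReal.ofReal_pow (exp_pos _).le, ← exp_nat_mul, mul_comm, Nat.cast_succ]
  have hdiv : a / ENNReal.ofReal (exp (-2)) = ENNReal.ofReal (exp 2) * a := by
    rw [ENNReal.div_eq_inv_mul, ← ENNReal.ofReal_inv_of_pos (exp_pos _), exp_neg, inv_inv]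
  have hexp3 : ENNReal.ofReal (exp 3) = ENNReal.ofReal (exp 1) * ENNReal.ofReal (exp 2) := by
    rw [← ENNReal.ofReal_mul (exp_pos _).le, ← exp_add]
    norm_num
  calc ENNReal.ofReal (exp (n + 1) * b) * a ^ ((n : ℝ) / (n + 1))
      ≤ ENNReal.ofReal (exp (n + 1) * b) * (ENNReal.ofReal (exp 2) * a) := by
        rw [← hdiv]
        gcongr
        exact ENNReal.rpow_div_add_one_le_div (by simp [exp_pos]) ENNReal.ofReal_ne_top hpow
    _ = ENNReal.ofReal (exp 3) * (ENNReal.ofReal (exp n * b) * a) := by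
        rw [exp_add, mul_comm (exp (n : ℝ)), mul_assoc, ENNReal.ofReal_mul (exp_pos _).le, hexp3]
        ring

theorem ofReal_mul_apply_le_of_monotone {φ : ℝ → ℝ} (hφ : Monotone φ) {x y : ℝ} (hx : 0 ≤ x)
    (hxy : x ≤ y) : ENNReal.ofReal (x * φ x) ≤ ENNReal.ofReal (y * φ y) := by
  rcases le_or_gt 0 (φ x) with hφx | hφx
  · exact ENNReal.ofReal_le_ofReal (mul_le_mul hxy (hφ hxy) hφx (hx.trans hxy))
  · rw [ENNReal.ofReal_of_nonpos (mul_nonpos_of_nonneg_of_nonpos hx hφx.le)]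
    exact zero_le

theorem tsum_mul_measure_le_lintegral {X ι : Type*} [MeasurableSpace X] [Countable ι]
    {μ : Measure X}
    {s : ι → Set X} (hs : ∀ i, MeasurableSet (s i)) (hd : Pairwise (Function.onFun Disjoint s))
    {c : ι → ℝ≥0∞} {f : X → ℝ≥0∞} (hcf : ∀ i, ∀ x ∈ s i, c i ≤ f x) :
    ∑' i, c i * μ (s i) ≤ ∫⁻ x, f x ∂μ :=
  calc ∑' i, c i * μ (s i) = ∑' i, ∫⁻ _ in s i, c i ∂μ := by simp only [setLIntegral_const]
    _ ≤ ∑' i, ∫⁻ x in s i, f x ∂μ := ENNReal.tsum_le_tsum fun i => setLIntegral_mono' (hs i) (hcf i)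
    _ = ∫⁻ x in ⋃ i, s i, f x ∂μ := (lintegral_iUnion hs hd f).symm
    _ ≤ ∫⁻ x, f x ∂μ := setLIntegral_le_lintegral _ _

theorem stmt2_general {X : Type*} [MeasurableSpace X] (m : Measure X)
    (φ : ℝ → ℝ) (hφmono : Monotone φ)
    (I : Set ℕ) (E : ℕ → Set X) (hmeas : ∀ n, MeasurableSet (E n))
    (hdisj : Pairwise (Function.onFun Disjoint E))
    (hbig : ∀ n ∈ I, ENNReal.ofReal (Real.exp (-2 * (n + 1))) ≤ m (E n))
    (g : X → ℝ)
    (hgE : ∀ n : ℕ, ∀ x ∈ E n, Real.exp n ≤ g x ∧ g x < Real.exp (n + 1)) :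
    ∑' n : I, ENNReal.ofReal (Real.exp ((n : ℕ) + 1) * φ (Real.exp (n : ℕ))) *
        m (E n) ^ ((((n : ℕ) : ℝ)) / (((n : ℕ) : ℝ) + 1)) ≤
      ENNReal.ofReal (Real.exp 3) * ∫⁻ x, ENNReal.ofReal (g x * φ (g x)) ∂m := by
  calc _ ≤ ∑' n : I, ENNReal.ofReal (exp 3) *
          (ENNReal.ofReal (exp (n : ℕ) * φ (exp (n : ℕ))) * m (E n)) :=
        ENNReal.tsum_le_tsum fun n => ofReal_exp_succ_mul_mul_rpow_le (hbig n n.2)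
    _ = ENNReal.ofReal (exp 3) *
          ∑' n : I, ENNReal.ofReal (exp (n : ℕ) * φ (exp (n : ℕ))) * m (E n) :=
        ENNReal.tsum_mul_left
    _ ≤ _ := by
        gcongr
        exact tsum_mul_measure_le_lintegral (s := fun n : I => E n) (fun n => hmeas n)
          (hdisj.comp_of_injective Subtype.coe_injective)
          fun n x hx => ofReal_mul_apply_le_of_monotone hφmono (exp_pos _).le (hgE n x hx).1

theorem stmt2 {X : Type*} [MeasurableSpace X] (m : Measure X) [IsProbabilityMeasure m]
    (φ : ℝ → ℝ) (hφmono : Monotone φ) (hφ1 : ∀ x : ℝ, x ≤ 1 → φ x = 1)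
    (I : Set ℕ) (E : ℕ → Set X) (hmeas : ∀ n, MeasurableSet (E n))
    (hdisj : Pairwise (Function.onFun Disjoint E))
    (hbig : ∀ n ∈ I, ENNReal.ofReal (Real.exp (-2 * (n + 1))) ≤ m (E n))
    (g : X → ℝ) (hgmeas : Measurable g) (hg1 : ∀ x, 1 ≤ g x)
    (hgE : ∀ n : ℕ, ∀ x ∈ E n, Real.exp n ≤ g x ∧ g x < Real.exp (n + 1)) :
    ∑' n : I, ENNReal.ofReal (Real.exp ((n : ℕ) + 1) * φ (Real.exp (n : ℕ))) *
        m (E n) ^ ((((n : ℕ) : ℝ)) / (((n : ℕ) : ℝ) + 1)) ≤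
      ENNReal.ofReal (Real.exp 3) * ∫⁻ x, ENNReal.ofReal (g x * φ (g x)) ∂m :=
  stmt2_general m φ hφmono I E hmeas hdisj hbig g hgE
end

section
/- Let S ⊆ ℕ be strictly increasing and Δ ⊇ S be obtained by adding, for each k, a set of new elements inside intervals [n_k, 2n_k) with n_{k} > 2n_{k-1}, such that the number of elements added in [n_k, 2n_k) is at most R(u_k)|S(n_k)| where R is decreasing to 0, u_k → ∞ as k → ∞, and R(u_k)|S(n_k)| > ∑_{j=1}^{k-1}|S(n_j)|. Then for n_k ≤ n < n_{k+1}, |Δ(n) \ S| ≤ 2R(u_k)|S(n_k)|, and consequently |Δ(n) \ S|/|S(n)| → 0, i.e. Δ is a perturbation of S. -/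
/-!
All of `Δ \ S` below `N < n (k + 1)` lies in the blocks `[n j, 2 n j)` with `j ≤ k`. The
blocks before the `k`-th contribute at most `∑_{j<k} |S(n j)|`, which the growth hypothesis
bounds by `R(u k) |S(n k)|`, and the `k`-th block contributes at most as much again. Since
`|S(N)| ≥ |S(n k)|` for `n k ≤ N`, the density of `Δ \ S` there is at most `2 R(u k) → 0`.
-/

open Filter Topology Finset

lemma exists_le_lt_succ_of_strictMono {n : ℕ → ℕ} (hn : StrictMono n) {N : ℕ}
    (hN : n 0 ≤ N) :
    ∃ k, n k ≤ N ∧ N < n (k + 1) := by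
  classical
  have hex : ∃ j, N < n j := ⟨N + 1, N.lt_succ_self.trans_le (hn.id_le _)⟩
  obtain ⟨k, hk⟩ : ∃ k, Nat.find hex = k + 1 :=
    Nat.exists_eq_succ_of_ne_zero fun h => by
      have := Nat.find_spec hex
      rw [h] at this
      omega
  exact ⟨k, not_lt.1 (Nat.find_min hex (by omega)), hk ▸ Nat.find_spec hex⟩

lemma tendsto_zero_of_le_on_blocks {f b : ℕ → ℝ} {n : ℕ → ℕ} (hn : StrictMono n)
    (hb : Tendsto b atTop (𝓝 0)) (hf : ∀ N, 0 ≤ f N)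
    (hfb : ∀ k N, n k ≤ N → N < n (k + 1) → f N ≤ b k) :
    Tendsto f atTop (𝓝 0) := by
  refine tendsto_order.2 ⟨fun a ha => .of_forall fun N => ha.trans_le (hf N), fun ε hε => ?_⟩
  obtain ⟨K, hK⟩ := eventually_atTop.1 (hb.eventually (gt_mem_nhds hε))
  filter_upwards [eventually_ge_atTop (n K)] with N hN
  obtain ⟨k, hkN, hNk⟩ :=
    exists_le_lt_succ_of_strictMono hn ((hn.monotone K.zero_le).trans hN)
  have hKk : K ≤ k := Nat.lt_succ_iff.1 (hn.lt_iff_lt.1 (hN.trans_lt hNk))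
  exact (hfb k N hkN hNk).trans_lt (hK k hKk)

lemma natCard_inter_Ico_le_sum_blocks {A : Set ℕ} {n e : ℕ → ℕ} (hn : Monotone n)
    (hA : A ⊆ ⋃ j, Set.Ico (n j) (e j)) {a k N : ℕ} (hN : N ≤ n (k + 1)) :
    Nat.card ↥(A ∩ Set.Ico a N) ≤
      ∑ j ∈ range (k + 1), Nat.card ↥(A ∩ Set.Ico (n j) (e j)) := by
  simp only [Nat.card_coe_set_eq]
  have hsub : A ∩ Set.Ico a N ⊆ ⋃ j ∈ range (k + 1), A ∩ Set.Ico (n j) (e j) := by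
    rintro x ⟨hxA, -, hxN⟩
    obtain ⟨j, hj⟩ := Set.mem_iUnion.1 (hA hxA)
    refine Set.mem_biUnion (mem_range.2 ?_) ⟨hxA, hj⟩
    by_contra hjk
    have := hn (not_lt.1 hjk)
    have := hj.1
    omega
  have hfin : (⋃ j ∈ range (k + 1), A ∩ Set.Ico (n j) (e j)).Finite :=
    (range (k + 1)).finite_toSet.biUnion fun j _ =>
      (Set.finite_Ico _ _).subset Set.inter_subset_right
  exact (Set.ncard_le_ncard hsub hfin).trans ((range (k + 1)).set_ncard_biUnion_le _)

lemma sum_range_succ_le_two_mul_last {c d r : ℕ → ℝ} {k : ℕ} (hc : ∀ j, 0 ≤ c j)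
    (hr : ∀ j, r j ≤ 1) (hd : ∀ j, d j ≤ r j * c j)
    (hk : ∑ j ∈ range k, c j ≤ r k * c k) :
    ∑ j ∈ range (k + 1), d j ≤ 2 * r k * c k :=
  calc ∑ j ∈ range (k + 1), d j = ∑ j ∈ range k, d j + d k := sum_range_succ _ _
    _ ≤ ∑ j ∈ range k, c j + r k * c k :=
      add_le_add (sum_le_sum fun j _ => (hd j).trans (mul_le_of_le_one_left (hc j) (hr j)))
        (hd k)
    _ ≤ 2 * r k * c k := by linarith

theorem stmt7_general (S Δ : Set ℕ)
    (n : ℕ → ℕ) (hn : ∀ k, 2 * n k < n (k + 1))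
    (u : ℕ → ℕ) (hu : Filter.Tendsto u Filter.atTop Filter.atTop)
    (R : ℕ → ℝ) (hR1 : ∀ v, R v ≤ 1)
    (hR0 : Filter.Tendsto R Filter.atTop (nhds 0))
    (hloc : Δ \ S ⊆ ⋃ k, Set.Ico (n k) (2 * n k))
    (hcard : ∀ k, (Nat.card ↥((Δ \ S) ∩ Set.Ico (n k) (2 * n k)) : ℝ) ≤
      R (u k) * (Nat.card ↥(S ∩ Set.Ico 1 (n k)) : ℝ))
    (hbig : ∀ k, (∑ j ∈ Finset.range k, (Nat.card ↥(S ∩ Set.Ico 1 (n j)) : ℝ)) <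
      R (u k) * (Nat.card ↥(S ∩ Set.Ico 1 (n k)) : ℝ)) :
    (∀ k, ∀ N, n k ≤ N → N < n (k + 1) →
      (Nat.card ↥((Δ \ S) ∩ Set.Ico 1 N) : ℝ) ≤
        2 * R (u k) * (Nat.card ↥(S ∩ Set.Ico 1 (n k)) : ℝ)) ∧
    Filter.Tendsto (fun N : ℕ => (Nat.card ↥((Δ \ S) ∩ Set.Ico 1 N) : ℝ) /
      (Nat.card ↥(S ∩ Set.Ico 1 N) : ℝ)) Filter.atTop (nhds 0) := by
  have hmono : StrictMono n := strictMono_nat_of_lt_succ fun k => by have := hn k; omega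
  have hblock : ∀ k N, n k ≤ N → N < n (k + 1) →
      (Nat.card ↥((Δ \ S) ∩ Set.Ico 1 N) : ℝ) ≤
        2 * R (u k) * (Nat.card ↥(S ∩ Set.Ico 1 (n k)) : ℝ) := fun k N _ hN =>
    (Nat.cast_le.2 (natCard_inter_Ico_le_sum_blocks hmono.monotone hloc hN.le)).trans <| by
      push_cast
      exact sum_range_succ_le_two_mul_last (fun _ => by positivity) (fun _ => hR1 _) hcard
        (hbig k).le
  refine ⟨hblock, tendsto_zero_of_le_on_blocks hmono (by simpa using (hR0.comp hu).const_mul 2)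
    (fun N => by positivity) fun k N hkN hNk => ?_⟩
  have hR : 0 < R (u k) :=
    pos_of_mul_pos_left ((sum_nonneg fun j _ => Nat.cast_nonneg _).trans_lt (hbig k))
      (Nat.cast_nonneg _)
  have hS : (Nat.card ↥(S ∩ Set.Ico 1 (n k)) : ℝ) ≤ Nat.card ↥(S ∩ Set.Ico 1 N) :=
    Nat.cast_le.2 <| Nat.card_mono ((Set.finite_Ico 1 N).subset Set.inter_subset_right)
      (Set.inter_subset_inter_right _ (Set.Ico_subset_Ico_right hkN))
  refine div_le_of_le_mul₀ (Nat.cast_nonneg _) (by positivity) ?_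
  calc (Nat.card ↥((Δ \ S) ∩ Set.Ico 1 N) : ℝ)
      ≤ 2 * R (u k) * Nat.card ↥(S ∩ Set.Ico 1 (n k)) := hblock k N hkN hNk
    _ ≤ 2 * R (u k) * Nat.card ↥(S ∩ Set.Ico 1 N) := by gcongr

theorem stmt7 (S Δ : Set ℕ) (hSΔ : S ⊆ Δ)
    (n : ℕ → ℕ) (hn0 : 0 < n 0) (hn : ∀ k, 2 * n k < n (k + 1))
    (u : ℕ → ℕ) (hu : Filter.Tendsto u Filter.atTop Filter.atTop)
    (R : ℕ → ℝ) (hR : Antitone R) (hRpos : ∀ v, 0 < R v) (hR1 : ∀ v, R v ≤ 1)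
    (hR0 : Filter.Tendsto R Filter.atTop (nhds 0))
    (hloc : Δ \ S ⊆ ⋃ k, Set.Ico (n k) (2 * n k))
    (hcard : ∀ k, (Nat.card ↥((Δ \ S) ∩ Set.Ico (n k) (2 * n k)) : ℝ) ≤
      R (u k) * (Nat.card ↥(S ∩ Set.Ico 1 (n k)) : ℝ))
    (hbig : ∀ k, (∑ j ∈ Finset.range k, (Nat.card ↥(S ∩ Set.Ico 1 (n j)) : ℝ)) <
      R (u k) * (Nat.card ↥(S ∩ Set.Ico 1 (n k)) : ℝ))
    (hSpos : ∀ k, 0 < Nat.card ↥(S ∩ Set.Ico 1 (n k))) :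
    (∀ k, ∀ N, n k ≤ N → N < n (k + 1) →
      (Nat.card ↥((Δ \ S) ∩ Set.Ico 1 N) : ℝ) ≤
        2 * R (u k) * (Nat.card ↥(S ∩ Set.Ico 1 (n k)) : ℝ)) ∧
    Filter.Tendsto (fun N : ℕ => (Nat.card ↥((Δ \ S) ∩ Set.Ico 1 N) : ℝ) /
      (Nat.card ↥(S ∩ Set.Ico 1 N) : ℝ)) Filter.atTop (nhds 0) :=
  stmt7_general S Δ n hn u hu R hR1 hR0 hloc hcard hbig
end

section
/- Let g: ℕ → ℝ satisfy c u^n < g(u) ≤ C u^n for all u ≥ 1, with constants 0 < c ≤ C and real n > 1, and suppose g(u) ≥ u². Let 1 < p ≤ 2, set α = n/(n-1) and N = g^{-1}(1/(p-1)). Then ∑_{u=1}^∞ u / 2^{g(u)(p-1)} ≤ N^{2α} + A, where A is a constant depending only on g (not on p). In particular, since α ≤ 2, the sum is at most N⁴ + A. -/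
/-!
With `t = p - 1` and `g N = 1 / t`, the terms with `u ≤ N ^ α` are at most `u` each, so together
at most `(N ^ α) ^ 2`. For `u > N ^ α` the choice `α = n / (n - 1)` gives `u * N ^ n ≤ u ^ n`,
hence `g u * t = g u / g N ≥ c u ^ n / (C N ^ n) ≥ (c / C) u`, and the tail is dominated by the
convergent series `∑ u 2 ^ (-(c / C) u)`, whose sum does not depend on `p`. Finally `u ^ 2 ≤ g u`
forces `n ≥ 2`, i.e. `α ≤ 2`.
-/

open Finset

lemma two_le_of_sq_le_mul_rpow {n C : ℝ} (h : ∀ u : ℝ, 1 ≤ u → u ^ 2 ≤ C * u ^ n) : 2 ≤ n := by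
  by_contra! hn
  have hC : 1 ≤ C := by simpa using h 1 le_rfl
  have hpos : 0 < 2 - n := by linarith
  set u : ℝ := (C + 1) ^ (2 - n)⁻¹
  have hu : 1 ≤ u := Real.one_le_rpow (by linarith) (inv_nonneg.2 hpos.le)
  have hu_pow : u ^ (2 - n) = C + 1 := by
    rw [← Real.rpow_mul (by linarith), inv_mul_cancel₀ hpos.ne', Real.rpow_one]
  have hu_le : u ^ (2 - n) ≤ C := by
    rw [Real.rpow_sub (by linarith), Real.rpow_two, div_le_iff₀ (by positivity)]
    exact h u hu
  linarith

lemma mul_rpow_le_rpow_of_rpow_div_sub_one_le {n N x : ℝ} (hn : 1 < n) (hN : 0 < N)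
    (hx : N ^ (n / (n - 1)) ≤ x) : x * N ^ n ≤ x ^ n := by
  have hx0 : 0 < x := (Real.rpow_pos_of_pos hN _).trans_le hx
  have hN_pow : N ^ n = (N ^ (n / (n - 1))) ^ (n - 1) := by
    rw [← Real.rpow_mul hN.le, div_mul_cancel₀ _ (by linarith)]
  have hx_pow : x ^ n = x * x ^ (n - 1) := by
    rw [mul_comm, ← Real.rpow_add_one hx0.ne', sub_add_cancel]
  rw [hN_pow, hx_pow]
  gcongr

lemma mul_le_div_of_rpow_bounds {g : ℝ → ℝ} {n c C N x : ℝ} (hn : 1 < n) (hc : 0 ≤ c)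
    (hN : 0 < N) (hgN : 0 < g N) (hgN_le : g N ≤ C * N ^ n) (hgx : c * x ^ n ≤ g x)
    (hx : N ^ (n / (n - 1)) ≤ x) : c / C * x ≤ g x / g N := by
  have hNn : 0 < N ^ n := Real.rpow_pos_of_pos hN n
  have hC : 0 < C := pos_of_mul_pos_left (hgN.trans_le hgN_le) hNn.le
  have hx0 : 0 < x := (Real.rpow_pos_of_pos hN _).trans_le hx
  calc c / C * x = c * (x * N ^ n) / (C * N ^ n) := by field_simp
    _ ≤ c * x ^ n / (C * N ^ n) := by
        gcongr
        exact mul_rpow_le_rpow_of_rpow_div_sub_one_le hn hN hx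
    _ ≤ g x / g N := div_le_div₀ (hgx.trans' (by positivity)) hgx hgN hgN_le

lemma div_two_rpow_le_mul_two_rpow_neg {x y K : ℝ} (hx : 0 ≤ x) (h : K * x ≤ y) :
    x / 2 ^ y ≤ x * 2 ^ (-(K * x)) := by
  rw [div_eq_mul_inv, ← Real.rpow_neg zero_le_two]
  gcongr
  exact one_le_two

lemma summable_succ_mul_two_rpow_neg {K : ℝ} (hK : 0 < K) :
    Summable fun u : ℕ => ((u : ℝ) + 1) * 2 ^ (-(K * ((u : ℝ) + 1))) := by
  have hr : ‖(2 : ℝ) ^ (-K)‖ < 1 := by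
    rw [Real.norm_of_nonneg (by positivity)]
    exact Real.rpow_lt_one_of_one_lt_of_neg one_lt_two (neg_neg_of_pos hK)
  have h := summable_pow_mul_geometric_of_norm_lt_one 1 hr
  rw [← summable_nat_add_iff 1] at h
  refine h.congr fun u => ?_
  rw [pow_one, ← Real.rpow_natCast, ← Real.rpow_mul zero_le_two]
  push_cast
  ring_nf

lemma tsum_le_sq_add_tsum {f a : ℕ → ℝ} {M : ℝ} (hM : 0 ≤ M) (hf : ∀ u, 0 ≤ f u)
    (ha : Summable a) (ha0 : ∀ u, 0 ≤ a u) (hhead : ∀ u : ℕ, f u ≤ u + 1)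
    (htail : ∀ u : ℕ, M < u + 1 → f u ≤ a u) :
    ∑' u, f u ≤ M ^ 2 + ∑' u, a u := by
  set m := ⌊M⌋₊
  have htail' : ∀ u, f (u + m) ≤ a (u + m) := fun u => htail _ <| by
    push_cast
    linarith [Nat.lt_floor_add_one M, (Nat.cast_nonneg u : (0 : ℝ) ≤ u)]
  have ha_shift := (summable_nat_add_iff m).2 ha
  have hf_shift : Summable fun u => f (u + m) :=
    ha_shift.of_nonneg_of_le (fun u => hf _) htail'
  have hf_sum : Summable f := (summable_nat_add_iff m).1 hf_shift
  have hsum_head : ∑ u ∈ range m, f u ≤ M ^ 2 := calc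
    ∑ u ∈ range m, f u ≤ ∑ _u ∈ range m, M := by
      refine sum_le_sum fun u hu => (hhead u).trans ?_
      have : ((u + 1 : ℕ) : ℝ) ≤ m := by exact_mod_cast mem_range.1 hu
      push_cast at this
      exact this.trans (Nat.floor_le hM)
    _ = m * M := by rw [sum_const, card_range, nsmul_eq_mul]
    _ ≤ M ^ 2 := by rw [sq]; gcongr; exact Nat.floor_le hM
  have hsum_tail : ∑' u, f (u + m) ≤ ∑' u, a u := by
    rw [← ha.sum_add_tsum_nat_add m]
    linarith [hf_shift.tsum_le_tsum htail' ha_shift,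
      sum_nonneg fun u (_ : u ∈ range m) => ha0 u]
  rw [← hf_sum.sum_add_tsum_nat_add m]
  linarith

theorem stmt11_general (g ginv : ℝ → ℝ)
    (n : ℝ) (hn : 1 < n) (c C : ℝ) (hc : 0 < c)
    (hlow : ∀ u : ℝ, 1 ≤ u → c * u ^ n < g u)
    (hup : ∀ u : ℝ, 1 ≤ u → g u ≤ C * u ^ n)
    (hsq : ∀ u : ℝ, 1 ≤ u → u ^ 2 ≤ g u)
    (hginv : ∀ y : ℝ, 1 ≤ y → g (ginv y) = y ∧ 1 ≤ ginv y) :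
    ∃ A : ℝ, ∀ p : ℝ, 1 < p → p ≤ 2 →
      (∑' u : ℕ, ((u : ℝ) + 1) / 2 ^ (g ((u : ℝ) + 1) * (p - 1)) ≤
        ginv (1 / (p - 1)) ^ (2 * (n / (n - 1))) + A) ∧
      (∑' u : ℕ, ((u : ℝ) + 1) / 2 ^ (g ((u : ℝ) + 1) * (p - 1)) ≤
        ginv (1 / (p - 1)) ^ (4 : ℕ) + A) := by
  have hC : 0 < C := by
    have hcC := (hlow 1 le_rfl).trans_le (hup 1 le_rfl)
    rw [Real.one_rpow, mul_one, mul_one] at hcC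
    exact hc.trans hcC
  have h2n : 2 ≤ n := two_le_of_sq_le_mul_rpow fun u hu => (hsq u hu).trans (hup u hu)
  refine ⟨∑' u : ℕ, ((u : ℝ) + 1) * 2 ^ (-(c / C * ((u : ℝ) + 1))), fun p hp1 hp2 => ?_⟩
  have ht : 0 < p - 1 := by linarith
  obtain ⟨hgN, hN⟩ := hginv (1 / (p - 1)) (by rw [le_div_iff₀ ht]; linarith)
  set N := ginv (1 / (p - 1))
  have hN0 : 0 < N := by linarith
  have hhead : ∀ u : ℕ, ((u : ℝ) + 1) / 2 ^ (g ((u : ℝ) + 1) * (p - 1)) ≤ u + 1 := fun u =>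
    div_le_self (by positivity) <| Real.one_le_rpow one_le_two <|
      mul_nonneg ((sq_nonneg _).trans (hsq _ (by simp))) ht.le
  have htail : ∀ u : ℕ, N ^ (n / (n - 1)) < u + 1 →
      ((u : ℝ) + 1) / 2 ^ (g ((u : ℝ) + 1) * (p - 1)) ≤
        ((u : ℝ) + 1) * 2 ^ (-(c / C * ((u : ℝ) + 1))) := by
    intro u hu
    refine div_two_rpow_le_mul_two_rpow_neg (by positivity) ?_
    have := mul_le_div_of_rpow_bounds hn hc.le hN0 (by rw [hgN]; positivity) (hup N hN)
      (hlow _ (by simp)).le hu.le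
    rwa [hgN, div_div_eq_mul_div, div_one] at this
  have hsum := tsum_le_sq_add_tsum (by positivity) (fun u => by positivity)
    (summable_succ_mul_two_rpow_neg (div_pos hc hC)) (fun u => by positivity) hhead htail
  rw [← Real.rpow_two, ← Real.rpow_mul hN0.le, mul_comm] at hsum
  refine ⟨hsum, hsum.trans ?_⟩
  have hα : 2 * (n / (n - 1)) ≤ 4 := by
    rw [← le_div_iff₀' two_pos, div_le_iff₀ (by linarith)]
    linarith
  rw [← Real.rpow_natCast]
  gcongr
  exact_mod_cast hα

theorem stmt11 (g ginv : ℝ → ℝ) (hg : StrictMono g)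
    (n : ℝ) (hn : 1 < n) (c C : ℝ) (hc : 0 < c) (hcC : c ≤ C)
    (hlow : ∀ u : ℝ, 1 ≤ u → c * u ^ n < g u)
    (hup : ∀ u : ℝ, 1 ≤ u → g u ≤ C * u ^ n)
    (hsq : ∀ u : ℝ, 1 ≤ u → u ^ 2 ≤ g u)
    (hginv : ∀ y : ℝ, 1 ≤ y → g (ginv y) = y ∧ 1 ≤ ginv y) :
    ∃ A : ℝ, ∀ p : ℝ, 1 < p → p ≤ 2 →
      (∑' u : ℕ, ((u : ℝ) + 1) / 2 ^ (g ((u : ℝ) + 1) * (p - 1)) ≤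
        ginv (1 / (p - 1)) ^ (2 * (n / (n - 1))) + A) ∧
      (∑' u : ℕ, ((u : ℝ) + 1) / 2 ^ (g ((u : ℝ) + 1) * (p - 1)) ≤
        ginv (1 / (p - 1)) ^ (4 : ℕ) + A) :=
  stmt11_general g ginv n hn c C hc hlow hup hsq hginv
end
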